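/- Let a : ℕ × ℕ → ℂ be such that the double series Σ_{n,m≥0} a_{nm} zⁿ wᵐ is absolutely summable for every (z, w) ∈ ℂ², and define φ(ζ) = Σ_{n,m≥0} a_{nm} ζⁿ (ζ̄)ᵐ for ζ ∈ ℂ. If φ is holomorphic (complex differentiable) on some nonempty open subset U of ℂ, then φ is an entire holomorphic function, i.e. complex differentiable at every point of ℂ. -/

import Mathlib

/-!
Write `Φ(z, w) = ∑ aₙₘ zⁿ wᵐ`, so that `φ ζ = Φ(ζ, ζ̄)`. The real derivative of `φ` at `ζ` in the
direction `u` is `u ∂_zΦ + ū ∂_wΦ` evaluated at `(ζ, ζ̄)`; comparing the directions `1` and `i`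
(Cauchy–Riemann) shows that `∂_wΦ(ζ, ζ̄) = 0` for `ζ ∈ U`. Now `∂_wΦ` is again an everywhere
convergent double power series, holomorphic along every complex line, and in the coordinates
`(s, t) ↦ (ζ₀ + s + i t, ζ̄₀ + s - i t)` the set `{(ζ, ζ̄) : ζ ∈ U}` contains a small real square.
Two applications of the one-variable identity theorem give `∂_wΦ ≡ 0`, hence `Φ(z, w) = Φ(z, 0)`
and `φ ζ = Φ(ζ, 0)` is entire.
-/

open Complex ComplexConjugate Filter Function Metric Set
open scoped Topology

def IsEntireCoeffs (a : ℕ × ℕ → ℂ) : Prop :=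
  ∀ z w : ℂ, Summable fun p : ℕ × ℕ => ‖a p * z ^ p.1 * w ^ p.2‖

noncomputable def doubleSeries (a : ℕ × ℕ → ℂ) (z w : ℂ) : ℂ :=
  ∑' p : ℕ × ℕ, a p * z ^ p.1 * w ^ p.2

def partialFst (a : ℕ × ℕ → ℂ) (p : ℕ × ℕ) : ℂ := (p.1 + 1 : ℂ) * a (p.1 + 1, p.2)

def partialSnd (a : ℕ × ℕ → ℂ) (p : ℕ × ℕ) : ℂ := (p.2 + 1 : ℂ) * a (p.1, p.2 + 1)

lemma succ_mul_pow_le {x : ℝ} (hx : 0 ≤ x) (m : ℕ) : (m + 1) * x ^ m ≤ (2 * x + 1) ^ (m + 1) :=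
  calc (m + 1) * x ^ m ≤ 2 ^ m * x ^ m := by
        gcongr; exact_mod_cast Nat.lt_two_pow_self
    _ = (2 * x) ^ m := (mul_pow _ _ _).symm
    _ ≤ (2 * x + 1) ^ m := by gcongr; linarith
    _ ≤ (2 * x + 1) ^ (m + 1) := pow_le_pow_right₀ (by linarith) m.le_succ

lemma succ_fst_injective : Injective fun p : ℕ × ℕ => (p.1 + 1, p.2) :=
  Prod.map_injective.2 ⟨add_left_injective 1, injective_id⟩

lemma succ_snd_injective : Injective fun p : ℕ × ℕ => (p.1, p.2 + 1) :=
  Prod.map_injective.2 ⟨injective_id, add_left_injective 1⟩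

namespace IsEntireCoeffs

variable {a : ℕ × ℕ → ℂ}

lemma summable (ha : IsEntireCoeffs a) (z w : ℂ) :
    Summable fun p : ℕ × ℕ => a p * z ^ p.1 * w ^ p.2 :=
  (ha z w).of_norm

lemma partialFst (ha : IsEntireCoeffs a) : IsEntireCoeffs (partialFst a) := by
  intro z w
  refine .of_nonneg_of_le (fun _ => norm_nonneg _) (fun p => ?_)
    ((ha (2 * ‖z‖ + 1 : ℝ) w).comp_injective succ_fst_injective)
  have hpow := succ_mul_pow_le (norm_nonneg z) p.1
  simp only [_root_.partialFst, comp_apply, norm_mul, norm_pow, norm_real,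
    Real.norm_eq_abs, abs_of_pos (by positivity : (0 : ℝ) < 2 * ‖z‖ + 1)]
  rw [show ‖(p.1 : ℂ) + 1‖ = p.1 + 1 by exact_mod_cast norm_natCast (p.1 + 1)]
  calc _ = ‖a (p.1 + 1, p.2)‖ * ((p.1 + 1) * ‖z‖ ^ p.1) * ‖w‖ ^ p.2 := by ring
    _ ≤ _ := by gcongr

lemma partialSnd (ha : IsEntireCoeffs a) : IsEntireCoeffs (partialSnd a) := by
  intro z w
  refine .of_nonneg_of_le (fun _ => norm_nonneg _) (fun p => ?_)
    ((ha z (2 * ‖w‖ + 1 : ℝ)).comp_injective succ_snd_injective)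
  have hpow := succ_mul_pow_le (norm_nonneg w) p.2
  simp only [_root_.partialSnd, comp_apply, norm_mul, norm_pow, norm_real,
    Real.norm_eq_abs, abs_of_pos (by positivity : (0 : ℝ) < 2 * ‖w‖ + 1)]
  rw [show ‖(p.2 : ℂ) + 1‖ = p.2 + 1 by exact_mod_cast norm_natCast (p.2 + 1)]
  calc _ = ‖a (p.1, p.2 + 1)‖ * ‖z‖ ^ p.1 * ((p.2 + 1) * ‖w‖ ^ p.2) := by ring
    _ ≤ _ := by gcongr

lemma hasSum_partialFst (ha : IsEntireCoeffs a) (z w : ℂ) :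
    HasSum (fun p : ℕ × ℕ => a p * (p.1 * z ^ (p.1 - 1)) * w ^ p.2)
      (doubleSeries (_root_.partialFst a) z w) := by
  rw [← succ_fst_injective.hasSum_iff, doubleSeries]
  · convert (ha.partialFst.summable z w).hasSum using 1
    ext p
    simp only [comp_apply, _root_.partialFst, Nat.add_sub_cancel]
    push_cast
    ring
  · rintro ⟨_ | n, m⟩ h
    · simp
    · exact absurd ⟨(n, m), rfl⟩ h

lemma hasSum_partialSnd (ha : IsEntireCoeffs a) (z w : ℂ) :
    HasSum (fun p : ℕ × ℕ => a p * z ^ p.1 * (p.2 * w ^ (p.2 - 1)))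
      (doubleSeries (_root_.partialSnd a) z w) := by
  rw [← succ_snd_injective.hasSum_iff, doubleSeries]
  · convert (ha.partialSnd.summable z w).hasSum using 1
    ext p
    simp only [comp_apply, _root_.partialSnd, Nat.add_sub_cancel]
    push_cast
    ring
  · rintro ⟨n, _ | m⟩ h
    · simp
    · exact absurd ⟨(n, m), rfl⟩ h

theorem hasDerivAt_line (ha : IsEntireCoeffs a) (z w γ δ s : ℂ) :
    HasDerivAt (fun s => doubleSeries a (z + γ * s) (w + δ * s))
      (γ * doubleSeries (_root_.partialFst a) (z + γ * s) (w + δ * s)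
        + δ * doubleSeries (_root_.partialSnd a) (z + γ * s) (w + δ * s)) s := by
  set F : ℕ × ℕ → ℂ → ℂ := fun p s => a p * (z + γ * s) ^ p.1 * (w + δ * s) ^ p.2
  have hF : ∀ p t, HasDerivAt (F p)
      (γ * (a p * (p.1 * (z + γ * t) ^ (p.1 - 1)) * (w + δ * t) ^ p.2)
        + δ * (a p * (z + γ * t) ^ p.1 * (p.2 * (w + δ * t) ^ (p.2 - 1)))) t := fun p t => by
    have hz : HasDerivAt (fun t => z + γ * t) γ t := by
      simpa using ((hasDerivAt_id t).const_mul γ).const_add z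
    have hw : HasDerivAt (fun t => w + δ * t) δ t := by
      simpa using ((hasDerivAt_id t).const_mul δ).const_add w
    exact (((hz.fun_pow p.1).const_mul (a p)).fun_mul (hw.fun_pow p.2)).congr_deriv (by ring)
  have hbound : ∀ p, ∀ t ∈ ball s 1, ‖F p t‖ ≤
      ‖a p * ((‖z‖ + ‖γ‖ * (‖s‖ + 1) : ℝ) : ℂ) ^ p.1
        * ((‖w‖ + ‖δ‖ * (‖s‖ + 1) : ℝ) : ℂ) ^ p.2‖ := by
    intro p t ht
    have ht' : ‖t‖ ≤ ‖s‖ + 1 := by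
      have := norm_sub_norm_le t s; rw [mem_ball, dist_eq_norm] at ht; linarith
    have hzt : ‖z + γ * t‖ ≤ ‖z‖ + ‖γ‖ * (‖s‖ + 1) :=
      (norm_add_le _ _).trans (by rw [norm_mul]; gcongr)
    have hwt : ‖w + δ * t‖ ≤ ‖w‖ + ‖δ‖ * (‖s‖ + 1) :=
      (norm_add_le _ _).trans (by rw [norm_mul]; gcongr)
    simp only [F, norm_mul, norm_pow, norm_real, Real.norm_eq_abs,
      abs_of_nonneg ((norm_nonneg _).trans hzt), abs_of_nonneg ((norm_nonneg _).trans hwt)]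
    gcongr
  have hs : s ∈ ball s 1 := mem_ball_self one_pos
  have hdiff : DifferentiableOn ℂ (fun t => ∑' p, F p t) (ball s 1) :=
    differentiableOn_tsum_of_summable_norm (ha _ _)
      (fun p t _ => (hF p t).differentiableAt.differentiableWithinAt) isOpen_ball hbound
  have hderiv := hasSum_deriv_of_summable_norm (ha _ _)
      (fun p t _ => (hF p t).differentiableAt.differentiableWithinAt) isOpen_ball hbound hs
  simp only [fun p => (hF p s).deriv] at hderiv
  have := (hdiff.differentiableAt (isOpen_ball.mem_nhds hs)).hasDerivAt
  rwa [hderiv.unique (((ha.hasSum_partialFst _ _).mul_left γ).add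
    ((ha.hasSum_partialSnd _ _).mul_left δ))] at this

theorem differentiable_line (ha : IsEntireCoeffs a) (z w γ δ : ℂ) :
    Differentiable ℂ fun s => doubleSeries a (z + γ * s) (w + δ * s) :=
  fun s => (ha.hasDerivAt_line z w γ δ s).differentiableAt

theorem hasDerivAt_conj_real_line (ha : IsEntireCoeffs a) (ζ u : ℂ) :
    HasDerivAt (fun t : ℝ => doubleSeries a (ζ + u * t) (conj (ζ + u * t)))
      (u * doubleSeries (_root_.partialFst a) ζ (conj ζ)
        + conj u * doubleSeries (_root_.partialSnd a) ζ (conj ζ)) 0 := by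
  have := (ha.hasDerivAt_line ζ (conj ζ) u (conj u) 0).comp_ofReal
  simpa [conj_ofReal] using this

theorem doubleSeries_partialSnd_conj_eq_zero (ha : IsEntireCoeffs a) {ζ : ℂ}
    (h : DifferentiableAt ℂ (fun ζ => doubleSeries a ζ (conj ζ)) ζ) :
    doubleSeries (_root_.partialSnd a) ζ (conj ζ) = 0 := by
  have hdir : ∀ u : ℂ, deriv (fun ζ => doubleSeries a ζ (conj ζ)) ζ * u
      = u * doubleSeries (_root_.partialFst a) ζ (conj ζ)
        + conj u * doubleSeries (_root_.partialSnd a) ζ (conj ζ) := fun u => by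
    have hline : HasDerivAt (fun s : ℂ => ζ + u * s) u ((0 : ℝ) : ℂ) := by
      simpa using ((hasDerivAt_id (0 : ℂ)).const_mul u).const_add ζ
    refine HasDerivAt.unique ?_ (ha.hasDerivAt_conj_real_line ζ u)
    exact (h.hasDerivAt.comp_of_eq _ hline (by simp)).comp_ofReal
  have h1 := hdir 1
  have hI := hdir I
  simp only [map_one, conj_I, mul_one, one_mul] at h1 hI
  have h2I : 2 * I * doubleSeries (_root_.partialSnd a) ζ (conj ζ) = 0 := by
    linear_combination hI - I * h1
  exact (mul_eq_zero.1 h2I).resolve_left (by simp)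

theorem doubleSeries_eq_of_partialSnd_eq_zero (ha : IsEntireCoeffs a)
    (h : ∀ z w, doubleSeries (_root_.partialSnd a) z w = 0) (z w : ℂ) :
    doubleSeries a z w = doubleSeries a z 0 := by
  have hd : ∀ s, HasDerivAt (fun s => doubleSeries a z s) 0 s := fun s => by
    simpa [h] using ha.hasDerivAt_line z 0 0 1 s
  exact is_const_of_deriv_eq_zero (fun s => (hd s).differentiableAt) (fun s => (hd s).deriv) w 0

end IsEntireCoeffs

theorem eq_zero_of_eventually_ofReal_eq_zero {f : ℂ → ℂ} (hf : Differentiable ℂ f)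
    (h : ∀ᶠ x : ℝ in 𝓝 0, f x = 0) (z : ℂ) : f z = 0 := by
  have hreal : Tendsto ((↑) : ℝ → ℂ) (𝓝[≠] 0) (𝓝[≠] 0) :=
    continuous_ofReal.continuousWithinAt.tendsto_nhdsWithin fun x hx => by simpa using hx
  have hfreq : ∃ᶠ w in 𝓝[≠] (0 : ℂ), f w = 0 :=
    hreal.frequently (h.filter_mono nhdsWithin_le_nhds).frequently
  have hanalytic : AnalyticOnNhd ℂ f univ := fun w _ => hf.analyticAt w
  exact hanalytic.eqOn_zero_of_preconnected_of_frequently_eq_zero isPreconnected_univ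
    (mem_univ 0) hfreq (mem_univ z)

theorem eq_zero_of_forall_conj_eq_zero {F : ℂ → ℂ → ℂ}
    (hF : ∀ z w γ δ : ℂ, Differentiable ℂ fun s => F (z + γ * s) (w + δ * s))
    {U : Set ℂ} (hU : IsOpen U) (hne : U.Nonempty) (hzero : ∀ ζ ∈ U, F ζ (conj ζ) = 0)
    (z w : ℂ) : F z w = 0 := by
  obtain ⟨ζ₀, hζ₀⟩ := hne
  have hnear : ∀ᶠ t : ℝ in 𝓝 0, ∀ᶠ s : ℝ in 𝓝 0,
      F ((ζ₀ + I * t) + 1 * s) ((conj ζ₀ - I * t) + 1 * s) = 0 := by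
    have hcont : Continuous fun q : ℝ × ℝ => ζ₀ + I * q.1 + q.2 := by fun_prop
    have hmem : ∀ᶠ q : ℝ × ℝ in 𝓝 (0, 0), ζ₀ + I * q.1 + q.2 ∈ U :=
      hcont.continuousAt.preimage_mem_nhds (by simpa using hU.mem_nhds hζ₀)
    rw [nhds_prod_eq] at hmem
    refine hmem.curry.mono fun t ht => ht.mono fun s hs => ?_
    convert hzero _ hs using 2
    · ring
    · simp only [map_add, map_mul, conj_I, conj_ofReal]; ring
  have hline : ∀ᶠ t : ℝ in 𝓝 0, ∀ s : ℂ,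
      F ((ζ₀ + I * t) + 1 * s) ((conj ζ₀ - I * t) + 1 * s) = 0 :=
    hnear.mono fun t ht => eq_zero_of_eventually_ofReal_eq_zero (hF _ _ 1 1) ht
  have hall : ∀ s t : ℂ, F ((ζ₀ + s) + I * t) ((conj ζ₀ + s) + -I * t) = 0 := fun s =>
    eq_zero_of_eventually_ofReal_eq_zero (hF _ _ I (-I))
      (hline.mono fun t ht => by convert ht s using 2 <;> ring)
  -- invert the coordinates `(s, t) ↦ (ζ₀ + s + I t, ζ̄₀ + s - I t)`
  convert hall ((z - ζ₀ + (w - conj ζ₀)) / 2) ((z - ζ₀ - (w - conj ζ₀)) / (2 * I)) using 2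
  · field_simp; ring
  · field_simp; ring

/-- If φ(ζ) = Σ a_{nm} ζⁿ ζ̄ᵐ (series absolutely summable everywhere) is holomorphic on
some nonempty open set U ⊆ ℂ, then φ is entire. -/
theorem entire_of_locally_holomorphic
    (a : ℕ × ℕ → ℂ)
    (hsum : ∀ z w : ℂ, Summable fun p : ℕ × ℕ => ‖a p * z ^ p.1 * w ^ p.2‖)
    (φ : ℂ → ℂ)
    (hφ : φ = fun ζ => ∑' p : ℕ × ℕ, a p * ζ ^ p.1 * (starRingEnd ℂ ζ) ^ p.2)
    (U : Set ℂ) (hU : IsOpen U) (hne : U.Nonempty)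
    (hdiff : DifferentiableOn ℂ φ U) :
    Differentiable ℂ φ := by
  have ha : IsEntireCoeffs a := hsum
  change φ = fun ζ => doubleSeries a ζ (conj ζ) at hφ
  subst hφ
  have hsnd : ∀ z w, doubleSeries (partialSnd a) z w = 0 :=
    eq_zero_of_forall_conj_eq_zero ha.partialSnd.differentiable_line hU hne fun ζ hζ =>
      ha.doubleSeries_partialSnd_conj_eq_zero (hdiff.differentiableAt (hU.mem_nhds hζ))
  have hφ₀ : (fun ζ => doubleSeries a ζ (conj ζ))
      = fun ζ => doubleSeries a (0 + 1 * ζ) (0 + 0 * ζ) :=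
    funext fun ζ => by simpa using ha.doubleSeries_eq_of_partialSnd_eq_zero hsnd ζ (conj ζ)
  exact hφ₀ ▸ ha.differentiable_line 0 0 1 0
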